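/- arXiv:1101.2456 — 4 statements merged into one kernel-verified Lean document; each statement's English description precedes it below -/
import Mathlib

section
/- The element X_n = Σ_{i=1}^n x_{n+1,i}x_{i,n+1} − n of U(gl_{n+1}) commutes with the subalgebra U(gl_n ⊕ gl_1), where gl_n is embedded in the top-left block and gl_1 is spanned by x_{n+1,n+1}. -/
/-! Put `u i = x_{n+1,i}` and `v i = x_{i,n+1}`. Under `ad A` for `A` in `gl_n ⊕ gl_1`, the
`u i` transform by `a - C` and the `v i` by `Cᵀ - a`, where `C` is the `gl_n` block of `A` and `a`
its `gl_1` entry. These are dual actions, so the pairing `∑ u i * v i` is `ad A`-invariant; the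
constant `n` is central. -/

open UniversalEnvelopingAlgebra

attribute [local instance] LieRing.ofAssociativeRing

variable (F : Type*) [Field F] (n : ℕ)

/-- The image in `U(gl_{n+1})` of the matrix unit `x_{ij}`. -/
noncomputable def xU (i j : Fin (n + 1)) :
    UniversalEnvelopingAlgebra F (Matrix (Fin (n + 1)) (Fin (n + 1)) F) :=
  UniversalEnvelopingAlgebra.ι F (Matrix.single i j (1 : F))

/-- `X_n = Σ_{i=1}^n x_{n+1,i} x_{i,n+1} − n ∈ U(gl_{n+1})`. -/
noncomputable def Xn :
    UniversalEnvelopingAlgebra F (Matrix (Fin (n + 1)) (Fin (n + 1)) F) :=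
  (∑ i : Fin n, xU F n (Fin.last n) i.castSucc * xU F n i.castSucc (Fin.last n)) - (n : _)

theorem lie_mul_eq_lie_mul_add_mul_lie {R : Type*} [Ring R] (x y z : R) :
    ⁅x, y * z⁆ = ⁅x, y⁆ * z + y * ⁅x, z⁆ := by
  simp only [Ring.lie_def]
  noncomm_ring

theorem commute_sum_mul_of_lie_eq {K R ι : Type*} [CommSemiring K] [Ring R] [Algebra K R]
    [Fintype ι] (x : R) (u v : ι → R) (C : Matrix ι ι K) (a : K)
    (hu : ∀ i, ⁅x, u i⁆ = a • u i - ∑ q, C i q • u q)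
    (hv : ∀ i, ⁅x, v i⁆ = ∑ p, C p i • v p - a • v i) :
    Commute x (∑ i, u i * v i) := by
  rw [commute_iff_lie_eq, lie_sum]
  simp only [lie_mul_eq_lie_mul_add_mul_lie, hu, hv, sub_mul, mul_sub, Finset.sum_mul,
    Finset.mul_sum, smul_mul_assoc, mul_smul_comm, Finset.sum_add_distrib,
    Finset.sum_sub_distrib]
  rw [Finset.sum_comm (f := fun i q => C i q • (u q * v i))]
  abel

section MatrixUnits

variable {K m : Type*} [Semiring K] [Fintype m] [DecidableEq m]

theorem Matrix.single_one_mul (i j : m) (A : Matrix m m K) :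
    Matrix.single i j 1 * A = ∑ q, A j q • Matrix.single i q 1 := by
  ext p r
  simp [Matrix.sum_apply, Matrix.single_apply, Matrix.mul_apply, ite_and]

theorem Matrix.mul_single_one (i j : m) (A : Matrix m m K) :
    A * Matrix.single i j 1 = ∑ p, A p i • Matrix.single p j 1 := by
  ext p r
  simp [Matrix.sum_apply, Matrix.single_apply, Matrix.mul_apply, ite_and]

end MatrixUnits

section BlockDiagonal

variable {K : Type*} [Semiring K] {n} (A : Matrix (Fin (n + 1)) (Fin (n + 1)) K)

theorem Matrix.mul_single_last_castSucc
    (hcol : ∀ i : Fin (n + 1), i ≠ Fin.last n → A i (Fin.last n) = 0) (i : Fin n) :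
    A * Matrix.single (Fin.last n) i.castSucc 1
      = A (Fin.last n) (Fin.last n) • Matrix.single (Fin.last n) i.castSucc 1 := by
  rw [Matrix.mul_single_one, Fintype.sum_eq_single (Fin.last n) fun p hp => by
    rw [hcol p hp, zero_smul]]

theorem Matrix.single_castSucc_last_mul
    (hrow : ∀ i : Fin (n + 1), i ≠ Fin.last n → A (Fin.last n) i = 0) (i : Fin n) :
    Matrix.single i.castSucc (Fin.last n) 1 * A
      = A (Fin.last n) (Fin.last n) • Matrix.single i.castSucc (Fin.last n) 1 := by
  rw [Matrix.single_one_mul, Fintype.sum_eq_single (Fin.last n) fun q hq => by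
    rw [hrow q hq, zero_smul]]

theorem Matrix.single_last_castSucc_mul
    (hcol : ∀ i : Fin (n + 1), i ≠ Fin.last n → A i (Fin.last n) = 0) (i : Fin n) :
    Matrix.single (Fin.last n) i.castSucc 1 * A
      = ∑ q : Fin n, A i.castSucc q.castSucc • Matrix.single (Fin.last n) q.castSucc 1 := by
  rw [Matrix.single_one_mul, Fin.sum_univ_castSucc, hcol _ (Fin.castSucc_lt_last i).ne,
    zero_smul, add_zero]

theorem Matrix.mul_single_castSucc_last
    (hrow : ∀ i : Fin (n + 1), i ≠ Fin.last n → A (Fin.last n) i = 0) (i : Fin n) :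
    A * Matrix.single i.castSucc (Fin.last n) 1
      = ∑ p : Fin n, A p.castSucc i.castSucc • Matrix.single p.castSucc (Fin.last n) 1 := by
  rw [Matrix.mul_single_one, Fin.sum_univ_castSucc, hrow _ (Fin.castSucc_lt_last i).ne,
    zero_smul, add_zero]

end BlockDiagonal

section LeviAction

variable {F n} (A : Matrix (Fin (n + 1)) (Fin (n + 1)) F)

theorem ι_lie_ι (B : Matrix (Fin (n + 1)) (Fin (n + 1)) F) :
    ⁅ι F A, ι F B⁆ = ι F (A * B - B * A) := by
  rw [← LieHom.map_lie, Ring.lie_def]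

theorem lie_ι_xU_last_castSucc
    (hcol : ∀ i : Fin (n + 1), i ≠ Fin.last n → A i (Fin.last n) = 0) (i : Fin n) :
    ⁅ι F A, xU F n (Fin.last n) i.castSucc⁆
      = A (Fin.last n) (Fin.last n) • xU F n (Fin.last n) i.castSucc
        - ∑ q : Fin n, A i.castSucc q.castSucc • xU F n (Fin.last n) q.castSucc := by
  rw [xU, ι_lie_ι, Matrix.mul_single_last_castSucc A hcol,
    Matrix.single_last_castSucc_mul A hcol, map_sub, map_smul, map_sum]
  simp only [map_smul, xU]

theorem lie_ι_xU_castSucc_last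
    (hrow : ∀ i : Fin (n + 1), i ≠ Fin.last n → A (Fin.last n) i = 0) (i : Fin n) :
    ⁅ι F A, xU F n i.castSucc (Fin.last n)⁆
      = ∑ p : Fin n, A p.castSucc i.castSucc • xU F n p.castSucc (Fin.last n)
        - A (Fin.last n) (Fin.last n) • xU F n i.castSucc (Fin.last n) := by
  rw [xU, ι_lie_ι, Matrix.mul_single_castSucc_last A hrow,
    Matrix.single_castSucc_last_mul A hrow, map_sub, map_smul, map_sum]
  simp only [map_smul, xU]

end LeviAction

/-- `X_n` commutes with `U(gl_n ⊕ gl_1)`: for every matrix `A` that is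
block-diagonal with blocks of sizes `n` and `1` (i.e. `A` has zero entries in the last
row and last column off the diagonal), the image of `A` in `U(gl_{n+1})` commutes with
`X_n`. -/
theorem Xn_commutes_with_levi
    (A : Matrix (Fin (n + 1)) (Fin (n + 1)) F)
    (hrow : ∀ i : Fin (n + 1), i ≠ Fin.last n → A (Fin.last n) i = 0)
    (hcol : ∀ i : Fin (n + 1), i ≠ Fin.last n → A i (Fin.last n) = 0) :
    UniversalEnvelopingAlgebra.ι F A * Xn F n = Xn F n * UniversalEnvelopingAlgebra.ι F A := by
  have hsum : Commute (ι F A)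
      (∑ i : Fin n, xU F n (Fin.last n) i.castSucc * xU F n i.castSucc (Fin.last n)) :=
    commute_sum_mul_of_lie_eq _ _ _ (fun i q => A i.castSucc q.castSucc)
      (A (Fin.last n) (Fin.last n)) (lie_ι_xU_last_castSucc A hcol)
      (lie_ι_xU_castSucc_last A hrow)
  exact (hsum.sub_right (Nat.cast_commute n _).symm).eq
end

section
/- For any partition λ and any residue i ∈ Z/pZ, the number of addable boxes of λ of content i minus the number of removable boxes of λ of content i equals n_i(λ) = m_{i−1}(λ) + m_{i+1}(λ) − 2m_i(λ) + δ_{i,0}, where m_j(λ) is the number of boxes of λ of content congruent to j mod p (for p = 0, contents are taken in Z). -/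
open scoped Classical

namespace FockStmt7

variable (p : ℕ)

/-- The content (mod `p`) of a cell `(k, l)` (row `k`, column `l`): `l − k`.
For `p = 0`, `ZMod 0 = ℤ` and contents are taken in `ℤ`. -/
def content (c : ℕ × ℕ) : ZMod p := ((c.2 : ℤ) - (c.1 : ℤ) : ℤ)

/-- `m_j(λ)`: the number of boxes of `λ` of content congruent to `j` mod `p`. -/
noncomputable def mBox (j : ZMod p) (lam : YoungDiagram) : ℕ :=
  (lam.cells.filter (fun c => content p c = j)).card

/-- `n_i(λ) = m_{i−1}(λ) + m_{i+1}(λ) − 2 m_i(λ) + δ_{i,0}`. -/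
noncomputable def nScalar (i : ZMod p) (lam : YoungDiagram) : ℤ :=
  (mBox p (i - 1) lam : ℤ) + (mBox p (i + 1) lam : ℤ) - 2 * (mBox p i lam : ℤ)
    + (if i = 0 then 1 else 0)

/-- The removable boxes of `λ` of content `i`: cells of `λ` whose deletion leaves a
Young diagram. -/
noncomputable def removables (i : ZMod p) (lam : YoungDiagram) : Finset (ℕ × ℕ) :=
  lam.cells.filter fun c =>
    content p c = i ∧ IsLowerSet (↑(lam.cells.erase c) : Set (ℕ × ℕ))

/-- The addable boxes of `λ` of content `i`: positions not in `λ` whose insertion gives a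
Young diagram.  (Every addable box is of the form `(r, rowLen r)` with `r ≤ colLen 0`.) -/
noncomputable def addables (i : ZMod p) (lam : YoungDiagram) : Finset (ℕ × ℕ) :=
  ((Finset.range (lam.colLen 0 + 1)).image (fun r => (r, lam.rowLen r))).filter fun c =>
    content p c = i ∧ c ∉ lam.cells ∧ IsLowerSet (↑(insert c lam.cells) : Set (ℕ × ℕ))

lemma rowLen_pos_iff (lam : YoungDiagram) (k : ℕ) :
    0 < lam.rowLen k ↔ k < lam.colLen 0 := by
  rw [← YoungDiagram.mem_iff_lt_rowLen, YoungDiagram.mem_iff_lt_colLen]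

lemma rowLen_zero (lam : YoungDiagram) {k : ℕ} (hk : lam.colLen 0 ≤ k) :
    lam.rowLen k = 0 := by
  by_contra h
  exact absurd ((rowLen_pos_iff lam k).mp (Nat.pos_of_ne_zero h)) (not_lt.mpr hk)

-- addability characterization

lemma isLowerSet_insert_iff (lam : YoungDiagram) (k : ℕ) :
    IsLowerSet (↑(insert (k, lam.rowLen k) lam.cells) : Set (ℕ × ℕ)) ↔
      (k = 0 ∨ lam.rowLen k < lam.rowLen (k - 1)) := by
  constructor
  · intro h
    rcases Nat.eq_zero_or_pos k with h0 | h0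
    · exact Or.inl h0
    · right
      have hle : ((k - 1, lam.rowLen k) : ℕ × ℕ) ≤ (k, lam.rowLen k) :=
        ⟨Nat.sub_le k 1, le_rfl⟩
      have hmem : ((k - 1, lam.rowLen k) : ℕ × ℕ) ∈
          (↑(insert (k, lam.rowLen k) lam.cells) : Set (ℕ × ℕ)) :=
        h hle (by simp)
      simp only [Finset.coe_insert, Set.mem_insert_iff, Finset.mem_coe] at hmem
      rcases hmem with heq | hmem
      · exact absurd (congrArg Prod.fst heq) (by simp; omega)
      · rw [YoungDiagram.mem_cells, YoungDiagram.mem_iff_lt_rowLen] at hmem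
        exact hmem
  · intro h
    intro a b hba ha
    simp only [Finset.coe_insert, Set.mem_insert_iff, Finset.mem_coe] at ha ⊢
    rcases ha with rfl | ha
    · by_cases hb : b = (k, lam.rowLen k)
      · exact Or.inl hb
      · right
        rw [YoungDiagram.mem_cells, YoungDiagram.mem_iff_lt_rowLen]
        obtain ⟨b1, b2⟩ := b
        obtain ⟨h1, h2⟩ := hba
        simp only at h1 h2 ⊢
        rcases lt_or_eq_of_le h2 with h2 | h2
        · exact lt_of_lt_of_le h2 (lam.rowLen_anti b1 k h1)
        · subst h2
          have hb1 : b1 < k := by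
            rcases lt_or_eq_of_le h1 with h1 | h1
            · exact h1
            · exact absurd (by rw [h1]) hb
          rcases h with rfl | h
          · omega
          · calc lam.rowLen k < lam.rowLen (k-1) := h
              _ ≤ lam.rowLen b1 := lam.rowLen_anti b1 (k-1) (by omega)
    · exact Or.inr (lam.isLowerSet hba ha)

-- removability characterization

lemma isLowerSet_erase_iff (lam : YoungDiagram) (a b : ℕ) (hab : (a, b) ∈ lam.cells) :
    IsLowerSet (↑(lam.cells.erase (a, b)) : Set (ℕ × ℕ)) ↔
      (b + 1 = lam.rowLen a ∧ lam.rowLen (a + 1) ≤ b) := by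
  rw [YoungDiagram.mem_cells, YoungDiagram.mem_iff_lt_rowLen] at hab
  constructor
  · intro h
    constructor
    · by_contra hne
      have hb1 : (a, b + 1) ∈ lam.cells := by
        rw [YoungDiagram.mem_cells, YoungDiagram.mem_iff_lt_rowLen]; omega
      have : ((a, b) : ℕ × ℕ) ∈ (↑(lam.cells.erase (a, b)) : Set (ℕ × ℕ)) := by
        refine h (a := (a, b+1)) (b := (a, b)) ⟨le_rfl, by omega⟩ ?_
        simp only [Finset.coe_erase, Set.mem_diff, Finset.mem_coe, Set.mem_singleton_iff]
        exact ⟨hb1, by simp⟩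
      simp at this
    · by_contra hne
      have hb1 : (a + 1, b) ∈ lam.cells := by
        rw [YoungDiagram.mem_cells, YoungDiagram.mem_iff_lt_rowLen]; omega
      have : ((a, b) : ℕ × ℕ) ∈ (↑(lam.cells.erase (a, b)) : Set (ℕ × ℕ)) := by
        refine h (a := (a+1, b)) (b := (a, b)) ⟨by omega, le_rfl⟩ ?_
        simp only [Finset.coe_erase, Set.mem_diff, Finset.mem_coe, Set.mem_singleton_iff]
        exact ⟨hb1, by simp⟩
      simp at this
  · rintro ⟨h1, h2⟩ x y hyx hx
    simp only [Finset.coe_erase, Set.mem_diff, Finset.mem_coe, Set.mem_singleton_iff] at hx ⊢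
    obtain ⟨hx, hxne⟩ := hx
    refine ⟨lam.isLowerSet hyx hx, ?_⟩
    rintro rfl
    obtain ⟨x1, x2⟩ := x
    obtain ⟨hy1, hy2⟩ := hyx
    simp only at hy1 hy2
    rw [YoungDiagram.mem_cells, YoungDiagram.mem_iff_lt_rowLen] at hx
    have hx2 : x2 = b := by
      have := lam.rowLen_anti a x1 hy1; omega
    subst hx2
    have hx1 : a < x1 := by
      rcases lt_or_eq_of_le hy1 with h | h
      · exact h
      · exact absurd (by rw [h]) hxne
    have := lam.rowLen_anti (a+1) x1 (by omega)
    omega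

lemma addables_card (i : ZMod p) (lam : YoungDiagram) :
    (addables p i lam).card = ((Finset.range (lam.colLen 0 + 1)).filter
      (fun k => content p (k, lam.rowLen k) = i ∧
        (k = 0 ∨ lam.rowLen k < lam.rowLen (k - 1)))).card := by
  rw [addables, Finset.filter_image]
  rw [Finset.card_image_of_injective _ (fun x y h => congrArg Prod.fst h)]
  congr 1
  apply Finset.filter_congr
  intro k _
  constructor
  · rintro ⟨h1, _, h3⟩
    exact ⟨h1, (isLowerSet_insert_iff lam k).mp h3⟩
  · rintro ⟨h1, h2⟩
    refine ⟨h1, ?_, (isLowerSet_insert_iff lam k).mpr h2⟩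
    rw [YoungDiagram.mem_cells, YoungDiagram.mem_iff_lt_rowLen]
    omega

lemma removables_card (i : ZMod p) (lam : YoungDiagram) :
    (removables p i lam).card = ((Finset.range (lam.colLen 0 + 1)).filter
      (fun k => lam.rowLen (k + 1) < lam.rowLen k ∧
        content p (k, lam.rowLen k - 1) = i)).card := by
  rw [removables]
  rw [show lam.cells.filter (fun c =>
      content p c = i ∧ IsLowerSet (↑(lam.cells.erase c) : Set (ℕ × ℕ))) =
    ((Finset.range (lam.colLen 0 + 1)).filter
      (fun k => lam.rowLen (k + 1) < lam.rowLen k ∧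
        content p (k, lam.rowLen k - 1) = i)).image
      (fun k => (k, lam.rowLen k - 1)) from ?_]
  · exact Finset.card_image_of_injective _ (fun x y h => congrArg Prod.fst h)
  · ext ⟨a, b⟩
    simp only [Finset.mem_filter, Finset.mem_image, Finset.mem_range]
    constructor
    · rintro ⟨hmem, hc, hls⟩
      obtain ⟨h1, h2⟩ := (isLowerSet_erase_iff lam a b hmem).mp hls
      refine ⟨a, ⟨?_, ?_, ?_⟩, ?_⟩
      · have : 0 < lam.rowLen a := by omega
        have := (rowLen_pos_iff lam a).mp this
        omega
      · omega
      · rw [show lam.rowLen a - 1 = b by omega]; exact hc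
      · simp; omega
    · rintro ⟨k, ⟨hk, hlt, hc⟩, heq⟩
      obtain ⟨rfl, rfl⟩ := Prod.mk.injEq .. ▸ (Prod.ext_iff.mp heq.symm)
      have hmem : (a, lam.rowLen a - 1) ∈ lam.cells := by
        rw [YoungDiagram.mem_cells, YoungDiagram.mem_iff_lt_rowLen]; omega
      refine ⟨hmem, hc, (isLowerSet_erase_iff lam a _ hmem).mpr ⟨by omega, by omega⟩⟩

noncomputable def F (i : ZMod p) (t : ℤ) : ℤ := if ((t : ZMod p) = i) then 1 else 0

lemma cells_eq (lam : YoungDiagram) :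
    lam.cells = (Finset.range (lam.colLen 0 + 1)).biUnion
      (fun k => (Finset.range (lam.rowLen k)).image (fun l => (k, l))) := by
  ext ⟨a, b⟩
  simp only [Finset.mem_biUnion, Finset.mem_range, Finset.mem_image,
    YoungDiagram.mem_cells, YoungDiagram.mem_iff_lt_rowLen, Prod.mk.injEq]
  constructor
  · intro h
    refine ⟨a, ?_, b, h, rfl, rfl⟩
    have := (rowLen_pos_iff lam a).mp (by omega)
    omega
  · rintro ⟨k, _, l, hl, rfl, rfl⟩
    exact hl

lemma mBox_eq (j : ZMod p) (lam : YoungDiagram) :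
    (mBox p j lam : ℤ) = ∑ k ∈ Finset.range (lam.colLen 0 + 1),
      ∑ l ∈ Finset.range (lam.rowLen k),
        (if (((l : ℤ) - (k : ℤ) : ZMod p) = j) then (1 : ℤ) else 0) := by
  rw [mBox, cells_eq lam, Finset.filter_biUnion]
  rw [Finset.card_biUnion]
  · push_cast
    refine Finset.sum_congr rfl fun k _ => ?_
    rw [Finset.filter_image,
      Finset.card_image_of_injective _ (fun x y h => congrArg Prod.snd h)]
    rw [Finset.card_filter]
    push_cast [content]
    rfl
  · intro x _ y _ hxy
    apply Finset.disjoint_filter_filter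
    simp only [Finset.disjoint_left, Finset.mem_image]
    rintro c ⟨l, _, rfl⟩ ⟨l', _, h⟩
    exact hxy (congrArg Prod.fst h).symm

lemma row_telescope (i : ZMod p) (k r : ℕ) :
    ∑ l ∈ Finset.range r,
      (F p i ((l : ℤ) - k + 1) + F p i ((l : ℤ) - k - 1) - 2 * F p i ((l : ℤ) - k))
    = F p i ((r : ℤ) - k) - F p i ((r : ℤ) - k - 1)
      - F p i (-(k : ℤ)) + F p i (-(k : ℤ) - 1) := by
  have := Finset.sum_range_sub
    (f := fun l => F p i ((l : ℤ) - k) - F p i ((l : ℤ) - k - 1)) r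
  rw [show (F p i ((r : ℤ) - k) - F p i ((r : ℤ) - k - 1)
      - F p i (-(k : ℤ)) + F p i (-(k : ℤ) - 1)) =
    (F p i ((r : ℤ) - k) - F p i ((r : ℤ) - k - 1))
    - (F p i (((0:ℕ) : ℤ) - k) - F p i (((0:ℕ) : ℤ) - k - 1)) from by push_cast; ring]
  rw [← this]
  refine Finset.sum_congr rfl fun l _ => ?_
  have h1 : ((l + 1 : ℕ) : ℤ) - k = (l : ℤ) - k + 1 := by push_cast; ring
  rw [h1]
  ring_nf

lemma F_zero (i : ZMod p) : F p i 0 = if i = 0 then 1 else 0 := by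
  simp only [F, Int.cast_zero]
  by_cases h : i = 0 <;> simp [h, eq_comm]

lemma nScalar_eq (i : ZMod p) (lam : YoungDiagram) :
    nScalar p i lam = (∑ k ∈ Finset.range (lam.colLen 0 + 1),
      (F p i ((lam.rowLen k : ℤ) - k) - F p i ((lam.rowLen k : ℤ) - k - 1)))
      + F p i (-(lam.colLen 0 : ℤ) - 1) := by
  have inner : ∀ k : ℕ,
      (∑ l ∈ Finset.range (lam.rowLen k),
        (if (((l : ℤ) - (k : ℤ) : ZMod p) = i - 1) then (1 : ℤ) else 0))
      + (∑ l ∈ Finset.range (lam.rowLen k),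
        (if (((l : ℤ) - (k : ℤ) : ZMod p) = i + 1) then (1 : ℤ) else 0))
      - 2 * (∑ l ∈ Finset.range (lam.rowLen k),
        (if (((l : ℤ) - (k : ℤ) : ZMod p) = i) then (1 : ℤ) else 0))
      = F p i ((lam.rowLen k : ℤ) - k) - F p i ((lam.rowLen k : ℤ) - k - 1)
        - F p i (-(k : ℤ)) + F p i (-(k : ℤ) - 1) := by
    intro k
    rw [← row_telescope p i k (lam.rowLen k), Finset.mul_sum,
      ← Finset.sum_add_distrib, ← Finset.sum_sub_distrib]
    refine Finset.sum_congr rfl fun l _ => ?_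
    simp only [F]
    push_cast
    simp only [eq_sub_iff_add_eq, sub_eq_iff_eq_add]
  have tele : ∑ k ∈ Finset.range (lam.colLen 0 + 1),
      (F p i (-(k : ℤ) - 1) - F p i (-(k : ℤ)))
      = F p i (-(lam.colLen 0 : ℤ) - 1) - F p i 0 := by
    have := Finset.sum_range_sub (f := fun k : ℕ => F p i (-(k : ℤ))) (lam.colLen 0 + 1)
    rw [show (-(lam.colLen 0 : ℤ) - 1)
        = -((lam.colLen 0 + 1 : ℕ) : ℤ) from by push_cast; ring,
      show (0 : ℤ) = -((0 : ℕ) : ℤ) from by norm_num, ← this]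
    refine Finset.sum_congr rfl fun k _ => ?_
    rw [show (-((k + 1 : ℕ) : ℤ)) = -(k : ℤ) - 1 from by push_cast; ring]
  rw [nScalar, mBox_eq, mBox_eq, mBox_eq, Finset.mul_sum,
    ← Finset.sum_add_distrib, ← Finset.sum_sub_distrib]
  rw [show (∑ k ∈ Finset.range (lam.colLen 0 + 1), _) = _ from Finset.sum_congr rfl
    (fun k _ => inner k)]
  rw [show (∑ k ∈ Finset.range (lam.colLen 0 + 1),
      (F p i ((lam.rowLen k : ℤ) - k) - F p i ((lam.rowLen k : ℤ) - k - 1)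
        - F p i (-(k : ℤ)) + F p i (-(k : ℤ) - 1)))
    = (∑ k ∈ Finset.range (lam.colLen 0 + 1),
      (F p i ((lam.rowLen k : ℤ) - k) - F p i ((lam.rowLen k : ℤ) - k - 1)))
      + (∑ k ∈ Finset.range (lam.colLen 0 + 1),
        (F p i (-(k : ℤ) - 1) - F p i (-(k : ℤ)))) from by
      rw [← Finset.sum_add_distrib]; exact Finset.sum_congr rfl fun k _ => by ring]
  rw [tele, F_zero]
  ring

/-- for any partition `λ` and residue `i ∈ ℤ/pℤ`, the number of addable
`i`-boxes minus the number of removable `i`-boxes equals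
`n_i(λ) = m_{i−1}(λ) + m_{i+1}(λ) − 2 m_i(λ) + δ_{i,0}`. -/
theorem addable_sub_removable (i : ZMod p) (lam : YoungDiagram) :
    ((addables p i lam).card : ℤ) - ((removables p i lam).card : ℤ) = nScalar p i lam := by
  rw [addables_card, removables_card, nScalar_eq, Finset.card_filter, Finset.card_filter]
  push_cast
  set N := lam.colLen 0 with hN
  have hA : ∀ k ∈ Finset.range (N + 1),
      (if (content p (k, lam.rowLen k) = i ∧
          (k = 0 ∨ lam.rowLen k < lam.rowLen (k - 1))) then (1 : ℤ) else 0)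
      = F p i ((lam.rowLen k : ℤ) - k)
        - (if (k ≠ 0 ∧ lam.rowLen (k - 1) = lam.rowLen k)
            then F p i ((lam.rowLen k : ℤ) - k) else 0) := by
    intro k _
    have hanti := lam.rowLen_anti (k - 1) k (Nat.sub_le k 1)
    by_cases hadd : k = 0 ∨ lam.rowLen k < lam.rowLen (k - 1)
    · have hne : ¬ (k ≠ 0 ∧ lam.rowLen (k - 1) = lam.rowLen k) := by
        rcases hadd with h | h
        · simp [h]
        · rintro ⟨-, heq⟩; omega
      rw [if_neg hne, sub_zero]
      have hiff : (content p (k, lam.rowLen k) = i ∧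
          (k = 0 ∨ lam.rowLen k < lam.rowLen (k - 1)))
          ↔ ((((lam.rowLen k : ℤ) - (k : ℤ) : ℤ) : ZMod p) = i) := by
        rw [and_iff_left hadd]
        exact Iff.rfl
      simp only [F, hiff]
      
    · have hne : (k ≠ 0 ∧ lam.rowLen (k - 1) = lam.rowLen k) := by
        push_neg at hadd
        exact ⟨hadd.1, le_antisymm hadd.2 hanti⟩
      rw [if_neg (fun hc => absurd hc.2 (by tauto)), if_pos hne]
      ring
  have hR : ∀ k ∈ Finset.range (N + 1),
      (if (lam.rowLen (k + 1) < lam.rowLen k ∧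
          content p (k, lam.rowLen k - 1) = i) then (1 : ℤ) else 0)
      = F p i ((lam.rowLen k : ℤ) - k - 1)
        - (if (lam.rowLen (k + 1) = lam.rowLen k)
            then F p i ((lam.rowLen k : ℤ) - k - 1) else 0) := by
    intro k _
    have hanti := lam.rowLen_anti k (k + 1) (by omega)
    by_cases hrem : lam.rowLen (k + 1) < lam.rowLen k
    · have harg : (((lam.rowLen k - 1 : ℕ) : ℤ) - (k : ℤ) : ℤ)
          = (lam.rowLen k : ℤ) - k - 1 := by omega
      have hiff : (lam.rowLen (k + 1) < lam.rowLen k ∧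
          content p (k, lam.rowLen k - 1) = i)
          ↔ (((((lam.rowLen k : ℤ) - k - 1) : ℤ) : ZMod p) = i) := by
        rw [and_iff_right hrem]
        show ((((lam.rowLen k - 1 : ℕ) : ℤ) - (k : ℤ) : ℤ) : ZMod p) = i ↔ _
        rw [harg]
      simp only [F, hiff]
      rw [if_neg (show ¬ (lam.rowLen (k + 1) = lam.rowLen k) from by omega), sub_zero]
    · rw [if_neg (fun hc => absurd hc.1 hrem), if_pos (by omega)]
      ring
  rw [Finset.sum_congr rfl hA, Finset.sum_congr rfl hR,
    Finset.sum_sub_distrib, Finset.sum_sub_distrib]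
  have key : ∑ k ∈ Finset.range (N + 1),
      (if (k ≠ 0 ∧ lam.rowLen (k - 1) = lam.rowLen k)
        then F p i ((lam.rowLen k : ℤ) - k) else 0)
      = (∑ k ∈ Finset.range (N + 1),
        (if (lam.rowLen (k + 1) = lam.rowLen k)
          then F p i ((lam.rowLen k : ℤ) - k - 1) else 0))
        - F p i (-(N : ℤ) - 1) := by
    rw [Finset.sum_range_succ', Finset.sum_range_succ]
    have h0 : (if ((0 : ℕ) ≠ 0 ∧ lam.rowLen (0 - 1) = lam.rowLen 0)
        then F p i ((lam.rowLen 0 : ℤ) - (0 : ℕ)) else 0) = 0 := by simp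
    have hNterm : (if (lam.rowLen (N + 1) = lam.rowLen N)
        then F p i ((lam.rowLen N : ℤ) - N - 1) else 0) = F p i (-(N : ℤ) - 1) := by
      rw [if_pos (by rw [rowLen_zero lam (le_refl N), rowLen_zero lam (by omega : N ≤ N + 1)]),
        rowLen_zero lam (le_refl N)]
      norm_num
    rw [h0, hNterm, add_zero, add_sub_cancel_right]
    refine Finset.sum_congr rfl fun m hm => ?_
    by_cases h : lam.rowLen (m + 1) = lam.rowLen m
    · rw [if_pos ⟨Nat.succ_ne_zero m, by simpa using h.symm⟩, if_pos h,
        show ((lam.rowLen (m + 1) : ℤ) - ((m + 1 : ℕ) : ℤ))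
          = (lam.rowLen m : ℤ) - m - 1 from by rw [h]; push_cast; ring]
    · rw [if_neg (fun hc => h (by simpa using hc.2.symm)), if_neg h]
  rw [key, Finset.sum_sub_distrib]
  ring

end FockStmt7
end

section
/- Define operators on the free C-vector space F with basis {v_λ : λ a partition} by e_i v_λ = Σ_{μ: λ = μ + i-box} v_μ and f_i v_λ = Σ_{μ: μ = λ + i-box} v_μ (boxes of content ≡ i mod p). Then for i ≠ j in Z/pZ, [e_i, f_j] = 0 as operators on F. -/
open scoped Classical

namespace FockStmt15

variable (p : ℕ)

/-- The content (mod `p`) of a cell `(k, l)` (row `k`, column `l`): `l − k`.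
For `p = 0`, `ZMod 0 = ℤ` and this is the ordinary content. -/
def content (c : ℕ × ℕ) : ZMod p := ((c.2 : ℤ) - (c.1 : ℤ) : ℤ)

/-- `m_j(λ)`: the number of boxes of `λ` of content `j` (mod `p`). -/
noncomputable def mBox (j : ZMod p) (lam : YoungDiagram) : ℕ :=
  (lam.cells.filter (fun c => content p c = j)).card

/-- `n_i(λ) = m_{i−1}(λ) + m_{i+1}(λ) − 2 m_i(λ) + δ_{i,0}`. -/
noncomputable def nScalar (i : ZMod p) (lam : YoungDiagram) : ℤ :=
  (mBox p (i - 1) lam : ℤ) + (mBox p (i + 1) lam : ℤ) - 2 * (mBox p i lam : ℤ)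
    + (if i = 0 then 1 else 0)

/-- The basis vector `v_μ` obtained from `λ` by removing the box `c` (zero if `c` is not a
removable box of `λ`). -/
noncomputable def eraseBox (lam : YoungDiagram) (c : ℕ × ℕ) : YoungDiagram →₀ ℂ :=
  if h : c ∈ lam.cells ∧ IsLowerSet (↑(lam.cells.erase c) : Set (ℕ × ℕ)) then
    Finsupp.single ⟨lam.cells.erase c, h.2⟩ 1
  else 0

/-- The basis vector `v_μ` obtained from `λ` by adding the box `c` (zero if `c` is not an
addable box of `λ`). -/
noncomputable def addBox (lam : YoungDiagram) (c : ℕ × ℕ) : YoungDiagram →₀ ℂ :=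
  if h : c ∉ lam.cells ∧ IsLowerSet (↑(insert c lam.cells) : Set (ℕ × ℕ)) then
    Finsupp.single ⟨insert c lam.cells, h.2⟩ 1
  else 0

/-- The Chevalley operator `e_i` on Fock space:
`e_i v_λ = Σ v_μ`, summing over all `μ` obtained from `λ` by removing a box of content `i`. -/
noncomputable def e (i : ZMod p) : (YoungDiagram →₀ ℂ) →ₗ[ℂ] (YoungDiagram →₀ ℂ) :=
  Finsupp.lsum ℂ fun lam => LinearMap.toSpanSingleton ℂ _
    (∑ c ∈ lam.cells.filter (fun c => content p c = i), eraseBox lam c)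

/-- The Chevalley operator `f_i` on Fock space:
`f_i v_λ = Σ v_μ`, summing over all `μ` obtained from `λ` by adding a box of content `i`.
(Every addable box of `λ` is of the form `(r, rowLen r)` with `r ≤ colLen 0`.) -/
noncomputable def f (i : ZMod p) : (YoungDiagram →₀ ℂ) →ₗ[ℂ] (YoungDiagram →₀ ℂ) :=
  Finsupp.lsum ℂ fun lam => LinearMap.toSpanSingleton ℂ _
    (∑ r ∈ Finset.range (lam.colLen 0 + 1),
      if content p (r, lam.rowLen r) = i then addBox lam (r, lam.rowLen r) else 0)

/-! ### Auxiliary combinatorial lemmas -/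

/-- If `b` is an addable box of `lam`, then `b` sits at the end of its row, and its row index
is at most `colLen 0`. -/
lemma addable_pos (lam : YoungDiagram) {b : ℕ × ℕ} (hb : b ∉ lam.cells)
    (hl : IsLowerSet (↑(insert b lam.cells) : Set (ℕ × ℕ))) :
    b.2 = lam.rowLen b.1 ∧ b.1 ≤ lam.colLen 0 := by
  have hmemb : b ∈ (↑(insert b lam.cells) : Set (ℕ × ℕ)) := by simp
  have h1 : lam.rowLen b.1 ≤ b.2 := by
    by_contra h
    push_neg at h
    exact hb ((YoungDiagram.mem_cells b).mpr (YoungDiagram.mem_iff_lt_rowLen.mpr h))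
  have h2 : b.2 ≤ lam.rowLen b.1 := by
    rcases Nat.eq_zero_or_pos b.2 with h0 | h0
    · omega
    · have hle : ((b.1, b.2 - 1) : ℕ × ℕ) ≤ b := Prod.le_def.mpr ⟨le_rfl, Nat.sub_le _ _⟩
      have hin := hl hle hmemb
      rw [Finset.coe_insert, Set.mem_insert_iff] at hin
      rcases hin with heq | hin
      · have h5 : b.2 - 1 = b.2 := congrArg Prod.snd heq
        omega
      · have h6 := YoungDiagram.mem_iff_lt_rowLen.mp ((YoungDiagram.mem_cells _).mp hin)
        omega
  refine ⟨le_antisymm h2 h1, ?_⟩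
  by_contra h
  push_neg at h
  have hle : ((b.1 - 1, 0) : ℕ × ℕ) ≤ b := Prod.le_def.mpr ⟨Nat.sub_le _ _, Nat.zero_le _⟩
  have hin := hl hle hmemb
  rw [Finset.coe_insert, Set.mem_insert_iff] at hin
  rcases hin with heq | hin
  · have h5 : b.1 - 1 = b.1 := congrArg Prod.fst heq
    omega
  · have h6 := YoungDiagram.mem_iff_lt_colLen.mp ((YoungDiagram.mem_cells _).mp hin)
    omega

lemma colLen_le (mu nu : YoungDiagram) (h : nu.cells ⊆ mu.cells) :
    nu.colLen 0 ≤ mu.colLen 0 := by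
  rcases Nat.eq_zero_or_pos (nu.colLen 0) with h0 | h0
  · omega
  · have hmem : ((nu.colLen 0 - 1, 0) : ℕ × ℕ) ∈ nu :=
      YoungDiagram.mem_iff_lt_colLen.mpr (by omega)
    have h6 := YoungDiagram.mem_iff_lt_colLen.mp
      ((YoungDiagram.mem_cells _).mp (h ((YoungDiagram.mem_cells _).mpr hmem)))
    omega

/-- If `b` is addable to `S` and `c` is removable from `insert b S` (with `b ≠ c`), then
`c` is removable from `S` and `b` is addable to `S.erase c`. -/
lemma swap_remove {S : Finset (ℕ × ℕ)} {b c : ℕ × ℕ} (hbc : b ≠ c)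
    (hS : IsLowerSet (↑S : Set (ℕ × ℕ))) (hbS : b ∉ S)
    (herase : IsLowerSet (↑((insert b S).erase c) : Set (ℕ × ℕ))) :
    IsLowerSet (↑(S.erase c) : Set (ℕ × ℕ)) ∧
      IsLowerSet (↑(insert b (S.erase c)) : Set (ℕ × ℕ)) := by
  have hset : (insert b S).erase c = insert b (S.erase c) := Finset.erase_insert_of_ne hbc
  constructor
  · have hE : S.erase c = S ∩ ((insert b S).erase c) := by
      rw [hset]
      ext x
      simp only [Finset.mem_erase, Finset.mem_inter, Finset.mem_insert]
      constructor
      · rintro ⟨hne, hxS⟩; exact ⟨hxS, Or.inr ⟨hne, hxS⟩⟩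
      · rintro ⟨hxS, hx⟩
        rcases hx with rfl | hx
        · exact absurd hxS hbS
        · exact hx
    rw [hE, Finset.coe_inter]
    exact hS.inter herase
  · rw [← hset]; exact herase

/-- If `c` is removable from `S` and `b` is addable to `S.erase c` (with `b ≠ c`), then
`b` is addable to `S` and `c` is removable from `insert b S`. -/
lemma swap_add {S : Finset (ℕ × ℕ)} {b c : ℕ × ℕ} (hbc : b ≠ c)
    (hS : IsLowerSet (↑S : Set (ℕ × ℕ))) (hcS : c ∈ S) (hbe : b ∉ S.erase c)
    (hins : IsLowerSet (↑(insert b (S.erase c)) : Set (ℕ × ℕ))) :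
    b ∉ S ∧ IsLowerSet (↑(insert b S) : Set (ℕ × ℕ)) ∧
      IsLowerSet (↑((insert b S).erase c) : Set (ℕ × ℕ)) := by
  have hbS : b ∉ S := fun h => hbe (Finset.mem_erase.mpr ⟨hbc, h⟩)
  have hset : (insert b S).erase c = insert b (S.erase c) := Finset.erase_insert_of_ne hbc
  refine ⟨hbS, ?_, by rw [hset]; exact hins⟩
  have hU : insert b S = S ∪ insert b (S.erase c) := by
    ext x
    simp only [Finset.mem_insert, Finset.mem_union, Finset.mem_erase]
    constructor
    · rintro (rfl | hx)
      · exact Or.inr (Or.inl rfl)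
      · exact Or.inl hx
    · rintro (hx | rfl | ⟨-, hx⟩)
      · exact Or.inr hx
      · exact Or.inl rfl
      · exact Or.inr hx
  rw [hU, Finset.coe_union]
  exact hS.union hins

/-! ### Computation of `e` and `f` on basis vectors -/

lemma e_single (i : ZMod p) (lam : YoungDiagram) :
    e p i (Finsupp.single lam 1) =
      ∑ c ∈ lam.cells.filter (fun c => content p c = i), eraseBox lam c := by
  rw [e, Finsupp.lsum_single, LinearMap.toSpanSingleton_apply, one_smul]

lemma addBox_row_zero (lam : YoungDiagram) {r : ℕ} (hr : lam.colLen 0 < r) :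
    addBox lam (r, lam.rowLen r) = 0 := by
  rw [addBox, dif_neg]
  rintro ⟨h1, h2⟩
  have h3 : r ≤ lam.colLen 0 := (addable_pos lam h1 h2).2
  omega

lemma f_single (j : ZMod p) (lam : YoungDiagram) (N : ℕ) (hN : lam.colLen 0 + 1 ≤ N) :
    f p j (Finsupp.single lam 1) =
      ∑ r ∈ Finset.range N,
        if content p (r, lam.rowLen r) = j then addBox lam (r, lam.rowLen r) else 0 := by
  rw [f, Finsupp.lsum_single, LinearMap.toSpanSingleton_apply, one_smul]
  apply Finset.sum_subset (Finset.range_subset_range.mpr hN)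
  intro r _ hr
  rw [Finset.mem_range, not_lt] at hr
  rw [addBox_row_zero lam (by omega)]
  split_ifs <;> rfl

lemma e_addBox (i j : ZMod p) (hij : i ≠ j) (lam : YoungDiagram) {b : ℕ × ℕ}
    (hb : content p b = j) :
    e p i (addBox lam b) =
      ∑ c ∈ lam.cells.filter (fun c => content p c = i),
        if h : b ∉ lam.cells ∧ IsLowerSet (↑(insert b lam.cells) : Set (ℕ × ℕ)) then
          eraseBox (⟨insert b lam.cells, h.2⟩ : YoungDiagram) c
        else 0 := by
  by_cases h : b ∉ lam.cells ∧ IsLowerSet (↑(insert b lam.cells) : Set (ℕ × ℕ))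
  · rw [addBox, dif_pos h, e_single]
    have hcells : (⟨insert b lam.cells, h.2⟩ : YoungDiagram).cells.filter
          (fun c => content p c = i) = lam.cells.filter (fun c => content p c = i) := by
      show (insert b lam.cells).filter _ = _
      rw [Finset.filter_insert, if_neg (fun hc => hij (hc.symm.trans hb))]
    rw [hcells]
    exact Finset.sum_congr rfl fun c _ => by rw [dif_pos h]
  · rw [addBox, dif_neg h, map_zero]
    exact (Finset.sum_eq_zero fun c _ => by rw [dif_neg h]).symm

lemma f_eraseBox (j : ZMod p) (lam : YoungDiagram) (c : ℕ × ℕ) (N : ℕ)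
    (hN : lam.colLen 0 + 1 ≤ N) :
    f p j (eraseBox lam c) =
      if h : c ∈ lam.cells ∧ IsLowerSet (↑(lam.cells.erase c) : Set (ℕ × ℕ)) then
        ∑ r ∈ Finset.range N,
          (if content p (r, (⟨lam.cells.erase c, h.2⟩ : YoungDiagram).rowLen r) = j then
            addBox ⟨lam.cells.erase c, h.2⟩
              (r, (⟨lam.cells.erase c, h.2⟩ : YoungDiagram).rowLen r)
          else 0)
      else 0 := by
  rw [eraseBox]
  split_ifs with h
  · refine f_single p j _ N ?_
    have h5 := colLen_le lam ⟨lam.cells.erase c, h.2⟩ (Finset.erase_subset _ _)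
    omega
  · rw [map_zero]

/-! ### The key pointwise identity -/

lemma crux (i j : ZMod p) (hij : i ≠ j) (lam : YoungDiagram) (r : ℕ) {c : ℕ × ℕ}
    (hc : c ∈ lam.cells) (hci : content p c = i) :
    (if content p (r, lam.rowLen r) = j then
        (if h : (r, lam.rowLen r) ∉ lam.cells ∧
            IsLowerSet (↑(insert (r, lam.rowLen r) lam.cells) : Set (ℕ × ℕ)) then
          eraseBox (⟨insert (r, lam.rowLen r) lam.cells, h.2⟩ : YoungDiagram) c
        else 0)
      else 0) =
    (if h : c ∈ lam.cells ∧ IsLowerSet (↑(lam.cells.erase c) : Set (ℕ × ℕ)) then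
        (if content p (r, (⟨lam.cells.erase c, h.2⟩ : YoungDiagram).rowLen r) = j then
          addBox ⟨lam.cells.erase c, h.2⟩
            (r, (⟨lam.cells.erase c, h.2⟩ : YoungDiagram).rowLen r)
        else 0)
      else 0) := by
  by_cases hrem : c ∈ lam.cells ∧ IsLowerSet (↑(lam.cells.erase c) : Set (ℕ × ℕ))
  · rw [dif_pos hrem]
    set nu : YoungDiagram := ⟨lam.cells.erase c, hrem.2⟩ with hnu
    by_cases hadd : ((r, nu.rowLen r) ∉ nu.cells ∧
        IsLowerSet (↑(insert (r, nu.rowLen r) nu.cells) : Set (ℕ × ℕ))) ∧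
        content p (r, nu.rowLen r) = j
    · obtain ⟨⟨hbe, hins⟩, hcont⟩ := hadd
      have hbc : (r, nu.rowLen r) ≠ c := fun hh => hij (hci.symm.trans (hh ▸ hcont))
      obtain ⟨hbS, hinsS, heraseS⟩ := swap_add hbc lam.isLowerSet hrem.1 hbe hins
      have hrl : nu.rowLen r = lam.rowLen r := (addable_pos lam hbS hinsS).1
      rw [← hrl]
      rw [if_pos hcont, if_pos hcont, dif_pos ⟨hbS, hinsS⟩, eraseBox, addBox,
        dif_pos ⟨Finset.mem_insert_of_mem hc, heraseS⟩, dif_pos ⟨hbe, hins⟩]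
      congr 1
      exact YoungDiagram.ext (Finset.erase_insert_of_ne hbc)
    · have hR0 : (if content p (r, nu.rowLen r) = j
          then addBox nu (r, nu.rowLen r) else 0) = 0 := by
        by_cases h2 : content p (r, nu.rowLen r) = j
        · rw [if_pos h2, addBox, dif_neg (fun hh => hadd ⟨hh, h2⟩)]
        · rw [if_neg h2]
      rw [hR0]
      by_cases h1 : content p (r, lam.rowLen r) = j
      · rw [if_pos h1]
        by_cases h2 : (r, lam.rowLen r) ∉ lam.cells ∧
            IsLowerSet (↑(insert (r, lam.rowLen r) lam.cells) : Set (ℕ × ℕ))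
        · rw [dif_pos h2, eraseBox]
          apply dif_neg
          rintro ⟨hc1, hc2⟩
          have hbc : (r, lam.rowLen r) ≠ c := fun hh => hij (hci.symm.trans (hh ▸ h1))
          have hs := swap_remove hbc lam.isLowerSet h2.1 hc2
          have hbe : (r, lam.rowLen r) ∉ nu.cells := fun hh => h2.1 (Finset.mem_of_mem_erase hh)
          have hrl : lam.rowLen r = nu.rowLen r := (addable_pos nu hbe hs.2).1
          refine hadd ⟨⟨?_, ?_⟩, ?_⟩
          · rw [← hrl]; exact hbe
          · rw [← hrl]; exact hs.2
          · rw [← hrl]; exact h1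
        · rw [dif_neg h2]
      · rw [if_neg h1]
  · rw [dif_neg hrem]
    by_cases h1 : content p (r, lam.rowLen r) = j
    · rw [if_pos h1]
      by_cases h2 : (r, lam.rowLen r) ∉ lam.cells ∧
          IsLowerSet (↑(insert (r, lam.rowLen r) lam.cells) : Set (ℕ × ℕ))
      · rw [dif_pos h2, eraseBox]
        apply dif_neg
        rintro ⟨hc1, hc2⟩
        have hbc : (r, lam.rowLen r) ≠ c := fun hh => hij (hci.symm.trans (hh ▸ h1))
        have hs := swap_remove hbc lam.isLowerSet h2.1 hc2
        exact hrem ⟨hc, hs.1⟩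
      · rw [dif_neg h2]
    · rw [if_neg h1]

/-- on the Fock space `F = ⊕_λ ℂ v_λ`, the Chevalley operators satisfy
`[e_i, f_j] = 0` for `i ≠ j` in `ℤ/pℤ`: adding a `j`-box and then removing an `i`-box
gives the same result (with multiplicity) as removing an `i`-box and then adding a
`j`-box. -/
theorem e_f_commute_of_ne (i j : ZMod p) (hij : i ≠ j) :
    (e p i) ∘ₗ (f p j) = (f p j) ∘ₗ (e p i) := by
  apply Finsupp.lhom_ext
  intro lam x
  have hsingle : (Finsupp.single lam x : YoungDiagram →₀ ℂ) = x • Finsupp.single lam 1 := by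
    rw [Finsupp.smul_single, smul_eq_mul, mul_one]
  simp only [LinearMap.comp_apply, hsingle, map_smul]
  refine congrArg (fun y => x • y) ?_
  set N := lam.colLen 0 + 2 with hN
  rw [f_single p j lam N (by omega), e_single p i lam, map_sum, map_sum]
  have hL : ∀ r ∈ Finset.range N,
      e p i (if content p (r, lam.rowLen r) = j then addBox lam (r, lam.rowLen r) else 0) =
        ∑ c ∈ lam.cells.filter (fun c => content p c = i),
          (if content p (r, lam.rowLen r) = j then
            (if h : (r, lam.rowLen r) ∉ lam.cells ∧
                IsLowerSet (↑(insert (r, lam.rowLen r) lam.cells) : Set (ℕ × ℕ)) then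
              eraseBox (⟨insert (r, lam.rowLen r) lam.cells, h.2⟩ : YoungDiagram) c
            else 0)
          else 0) := by
    intro r _
    by_cases h1 : content p (r, lam.rowLen r) = j
    · rw [if_pos h1, e_addBox p i j hij lam h1]
      exact Finset.sum_congr rfl fun c _ => (if_pos h1).symm
    · rw [if_neg h1, map_zero]
      exact (Finset.sum_eq_zero fun c _ => if_neg h1).symm
  have hR : ∀ c ∈ lam.cells.filter (fun c => content p c = i),
      f p j (eraseBox lam c) =
        ∑ r ∈ Finset.range N,
          (if h : c ∈ lam.cells ∧ IsLowerSet (↑(lam.cells.erase c) : Set (ℕ × ℕ)) then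
            (if content p (r, (⟨lam.cells.erase c, h.2⟩ : YoungDiagram).rowLen r) = j then
              addBox ⟨lam.cells.erase c, h.2⟩
                (r, (⟨lam.cells.erase c, h.2⟩ : YoungDiagram).rowLen r)
            else 0)
          else 0) := by
    intro c _
    rw [f_eraseBox p j lam c N (by omega)]
    by_cases h : c ∈ lam.cells ∧ IsLowerSet (↑(lam.cells.erase c) : Set (ℕ × ℕ))
    · rw [dif_pos h]
      exact Finset.sum_congr rfl fun r _ => by rw [dif_pos h]
    · rw [dif_neg h]
      exact (Finset.sum_eq_zero fun r _ => dif_neg h).symm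
  rw [Finset.sum_congr rfl hL, Finset.sum_congr rfl hR, Finset.sum_comm]
  refine Finset.sum_congr rfl fun c hcmem => Finset.sum_congr rfl fun r _ => ?_
  rw [Finset.mem_filter] at hcmem
  exact crux p i j hij lam r hcmem.1 hcmem.2

end FockStmt15
end

section
/- Let λ, μ be partitions of the same integer d. Then λ and μ have the same p-core if and only if for every residue i ∈ Z/pZ, the number of boxes of λ of content ≡ i (mod p) equals the number of boxes of μ of content ≡ i (mod p). -/
namespace Stmt17

/-- Two cells of the `ℕ × ℕ` grid are adjacent (share an edge). -/
def Adj (c d : ℕ × ℕ) : Prop :=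
  (c.1 = d.1 ∧ (c.2 = d.2 + 1 ∨ d.2 = c.2 + 1)) ∨
  (c.2 = d.2 ∧ (c.1 = d.1 + 1 ∨ d.1 = c.1 + 1))

/-- A finite set of cells is connected: any two of its cells are joined by a path of
adjacent cells staying inside the set. -/
def Connected (D : Finset (ℕ × ℕ)) : Prop :=
  ∀ c ∈ D, ∀ d ∈ D, Relation.ReflTransGen (fun x y => x ∈ D ∧ y ∈ D ∧ Adj x y) c d

/-- `μ` is obtained from `λ` by removing a rim `p`-hook: `μ ⊆ λ`, the skew `λ \ μ` has
`p` cells, is connected, and lies along the rim (contains no 2×2 square). -/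
def RimHook (p : ℕ) (lam mu : YoungDiagram) : Prop :=
  mu.cells ⊆ lam.cells ∧ (lam.cells \ mu.cells).card = p ∧
    Connected (lam.cells \ mu.cells) ∧
    ¬∃ a b : ℕ, (a, b) ∈ lam.cells \ mu.cells ∧ (a + 1, b) ∈ lam.cells \ mu.cells ∧
      (a, b + 1) ∈ lam.cells \ mu.cells ∧ (a + 1, b + 1) ∈ lam.cells \ mu.cells

/-- `λ` is a `p`-core: no rim `p`-hook can be removed from it. -/
def IsCore (p : ℕ) (lam : YoungDiagram) : Prop := ¬∃ mu, RimHook p lam mu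

/-- `m_i(λ)`: the number of boxes of `λ` (at position `(row k, col l)`) of content
`l − k ≡ i (mod p)`. -/
noncomputable def mBox (p : ℕ) (i : ZMod p) (lam : YoungDiagram) : ℕ :=
  (lam.cells.filter fun c => (((c.2 : ℤ) - (c.1 : ℤ) : ℤ) : ZMod p) = i).card

/-!
A rim `p`-hook is connected and contains no `2 × 2` square, so its contents are `p` consecutive
integers: removing it removes exactly one box of each residue class mod `p`. Hence partitions of
the same size with a common `p`-core have the same residue counts.

Conversely, place a bead at each beta number `λ_k - k` on a `p`-runner abacus. Summing along the
rows telescopes to `m_i(λ) - m_{i+1}(λ) = #(beads on runner i + 1) - c_{i+1}` with `c` independent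
of `λ`. If a bead could move up `p` positions to an empty spot, a rim `p`-hook could be removed;
so the beads of a `p`-core are flush on every runner, and a core is determined by its runner
counts, i.e. by its residue counts up to an additive constant. Removing hooks from `λ` and `μ`
down to cores preserves equality of residue counts up to such a constant, so the cores agree.
-/

def content (c : ℕ × ℕ) : ℤ := c.2 - c.1

theorem Adj.symm {c d : ℕ × ℕ} (h : Adj c d) : Adj d c := by
  unfold Adj at *
  omega

theorem Adj.content_eq {c d : ℕ × ℕ} (h : Adj c d) :
    content d = content c + 1 ∨ content d = content c - 1 := by
  unfold Adj content at *
  omega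

theorem Connected.of_forall_reflTransGen {D : Finset (ℕ × ℕ)} (c₀ : ℕ × ℕ)
    (h : ∀ c ∈ D, Relation.ReflTransGen (fun x y => x ∈ D ∧ y ∈ D ∧ Adj x y) c c₀) :
    Connected D := by
  have : Std.Symm (fun x y => x ∈ D ∧ y ∈ D ∧ Adj x y) := ⟨fun _ _ h => ⟨h.2.1, h.1, h.2.2.symm⟩⟩
  exact fun c hc d hd => (h c hc).trans (Relation.ReflTransGen.stdSymm.symm _ _ (h d hd))

theorem exists_mem_content_eq_of_reflTransGen {D : Finset (ℕ × ℕ)} {c d : ℕ × ℕ}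
    (h : Relation.ReflTransGen (fun x y => x ∈ D ∧ y ∈ D ∧ Adj x y) c d) (hc : c ∈ D) {e : ℤ}
    (hce : content c ≤ e) (hed : e ≤ content d) : ∃ x ∈ D, content x = e := by
  induction h using Relation.ReflTransGen.head_induction_on with
  | refl => exact ⟨_, hc, le_antisymm hce hed⟩
  | head hstep _ ih =>
    rcases eq_or_lt_of_le hce with rfl | hlt
    · exact ⟨_, hc, rfl⟩
    · exact ih hstep.2.1 (by rcases hstep.2.2.content_eq with h | h <;> omega)

theorem content_injOn_sdiff {lam mu : YoungDiagram}
    (hsq : ¬∃ a b : ℕ, (a, b) ∈ lam.cells \ mu.cells ∧ (a + 1, b) ∈ lam.cells \ mu.cells ∧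
      (a, b + 1) ∈ lam.cells \ mu.cells ∧ (a + 1, b + 1) ∈ lam.cells \ mu.cells) :
    Set.InjOn content ↑(lam.cells \ mu.cells) := by
  suffices h : ∀ c ∈ lam.cells \ mu.cells, ∀ d ∈ lam.cells \ mu.cells,
      content c = content d → ¬c.1 < d.1 by
    intro c hc d hd hcd
    have h₁ := h c hc d hd hcd
    have h₂ := h d hd c hc hcd.symm
    unfold content at hcd
    exact Prod.ext (by omega) (by omega)
  rintro ⟨a, b⟩ hc ⟨a', b'⟩ hd hcd (hlt : a < a')
  simp only [content] at hcd
  simp only [Finset.mem_sdiff, YoungDiagram.mem_cells] at hc hd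
  -- the square spanned by `(a, b)` and `(a + 1, b + 1)` lies below `(a', b')` and above `(a, b)`
  have hsk : ∀ i j, a ≤ i → i ≤ a + 1 → b ≤ j → j ≤ b + 1 → (i, j) ∈ lam.cells \ mu.cells :=
    fun i j hi hi' hj hj' => Finset.mem_sdiff.mpr
      ⟨lam.up_left_mem (by omega) (by omega) hd.1, fun h => hc.2 (mu.up_left_mem hi hj h)⟩
  exact hsq ⟨a, b, hsk _ _ le_rfl (by omega) le_rfl (by omega), hsk _ _ (by omega) le_rfl le_rfl
    (by omega), hsk _ _ le_rfl (by omega) (by omega) le_rfl, hsk _ _ (by omega) le_rfl (by omega)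
    le_rfl⟩

namespace RimHook

variable {p : ℕ} {lam mu : YoungDiagram}

theorem card_cells (h : RimHook p lam mu) : lam.cells.card = mu.cells.card + p := by
  rw [← Finset.card_sdiff_add_card_eq_card h.1, h.2.1, add_comm]

theorem residue_injOn (h : RimHook p lam mu) :
    Set.InjOn (fun c => (content c : ZMod p)) ↑(lam.cells \ mu.cells) := by
  obtain ⟨-, hcard, hconn, hsq⟩ := h
  have hinj := content_injOn_sdiff hsq
  suffices hlt : ∀ c ∈ lam.cells \ mu.cells, ∀ d ∈ lam.cells \ mu.cells,
      content c ≤ content d → content d - content c < p by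
    intro c hc d hd hcd
    refine hinj hc hd ?_
    rcases le_total (content c) (content d) with hle | hle
    · have hdvd := (ZMod.intCast_eq_intCast_iff_dvd_sub _ _ _).mp hcd
      linarith [Int.eq_zero_of_dvd_of_nonneg_of_lt (by linarith) (hlt c hc d hd hle) hdvd]
    · have hdvd := (ZMod.intCast_eq_intCast_iff_dvd_sub _ _ _).mp hcd.symm
      linarith [Int.eq_zero_of_dvd_of_nonneg_of_lt (by linarith) (hlt d hd c hc hle) hdvd]
  intro c hc d hd hle
  have hsub : Finset.Icc (content c) (content d) ⊆ (lam.cells \ mu.cells).image content := by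
    intro e he
    rw [Finset.mem_Icc] at he
    obtain ⟨x, hx, rfl⟩ := exists_mem_content_eq_of_reflTransGen (hconn c hc d hd) hc he.1 he.2
    exact Finset.mem_image_of_mem _ hx
  have := Finset.card_le_card hsub
  rw [Int.card_Icc, Finset.card_image_of_injOn hinj, hcard] at this
  omega

theorem card_filter_residue_sdiff [NeZero p] (h : RimHook p lam mu) (i : ZMod p) :
    ((lam.cells \ mu.cells).filter fun c => (content c : ZMod p) = i).card = 1 := by
  obtain ⟨c, hc, hci⟩ := Finset.surj_on_of_inj_on_of_card_le (t := Finset.univ)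
    (fun c _ => (content c : ZMod p)) (fun _ _ => Finset.mem_univ _)
    (fun _ _ ha hb hab => h.residue_injOn ha hb hab)
    (by rw [Finset.card_univ, ZMod.card, h.2.1]) i (Finset.mem_univ _)
  refine Finset.card_eq_one.mpr ⟨c, Finset.eq_singleton_iff_unique_mem.mpr
    ⟨Finset.mem_filter.mpr ⟨hc, hci.symm⟩, fun d hd => ?_⟩⟩
  rw [Finset.mem_filter] at hd
  exact h.residue_injOn hd.1 hc (hd.2.trans hci)

theorem mBox_eq_add_one [NeZero p] (h : RimHook p lam mu) (i : ZMod p) :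
    mBox p i lam = mBox p i mu + 1 := by
  unfold mBox
  conv_lhs => rw [← Finset.union_sdiff_of_subset h.1]
  rw [Finset.filter_union, Finset.card_union_of_disjoint
    (Finset.disjoint_filter_filter Finset.disjoint_sdiff)]
  exact congrArg _ (h.card_filter_residue_sdiff i)

end RimHook

theorem mBox_eq_add_of_reflTransGen {p : ℕ} [NeZero p] {lam nu : YoungDiagram}
    (h : Relation.ReflTransGen (RimHook p) lam nu) :
    ∃ n, lam.cells.card = nu.cells.card + n * p ∧ ∀ i, mBox p i lam = mBox p i nu + n := by
  induction h using Relation.ReflTransGen.head_induction_on with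
  | refl => exact ⟨0, by simp⟩
  | head hstep _ ih =>
    obtain ⟨n, hcard, hm⟩ := ih
    refine ⟨n + 1, by rw [hstep.card_cells, hcard]; ring, fun i => ?_⟩
    rw [hstep.mBox_eq_add_one, hm]
    ring

theorem exists_isCore_reflTransGen {p : ℕ} (hp : 0 < p) (lam : YoungDiagram) :
    ∃ nu, IsCore p nu ∧ Relation.ReflTransGen (RimHook p) lam nu := by
  by_cases h : IsCore p lam
  · exact ⟨lam, h, .refl⟩
  obtain ⟨mu, hmu⟩ := not_not.mp h
  obtain ⟨nu, hnu, hmu_nu⟩ := exists_isCore_reflTransGen hp mu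
  exact ⟨nu, hnu, .head hmu hmu_nu⟩
termination_by lam.cells.card
decreasing_by have := hmu.card_cells; omega

/-- The position of the `k`-th bead on the abacus of `λ`. -/
def beta (lam : YoungDiagram) (k : ℕ) : ℤ := lam.rowLen k - k

theorem rowLen_eq_zero_of_colLen_le (lam : YoungDiagram) {k : ℕ} (hk : lam.colLen 0 ≤ k) :
    lam.rowLen k = 0 := by
  by_contra h
  have := YoungDiagram.mem_iff_lt_colLen.mp (YoungDiagram.mem_iff_lt_rowLen.mpr
    (Nat.pos_of_ne_zero h))
  omega

theorem beta_strictAnti (lam : YoungDiagram) : StrictAnti (beta lam) := by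
  intro k k' hk
  have := lam.rowLen_anti k k' hk.le
  unfold beta
  omega

theorem beta_of_colLen_le (lam : YoungDiagram) {k : ℕ} (hk : lam.colLen 0 ≤ k) :
    beta lam k = -k := by
  simp [beta, rowLen_eq_zero_of_colLen_le lam hk]

theorem eq_of_forall_rowLen_eq {lam mu : YoungDiagram} (h : ∀ k, lam.rowLen k = mu.rowLen k) :
    lam = mu := by
  ext ⟨a, b⟩
  simp only [YoungDiagram.mem_cells, YoungDiagram.mem_iff_lt_rowLen, h]

theorem eq_of_range_beta_eq {lam mu : YoungDiagram}
    (h : Set.range (beta lam) = Set.range (beta mu)) : lam = mu := by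
  have hdual : OrderDual.toDual ∘ beta lam = OrderDual.toDual ∘ beta mu := by
    rw [← StrictMono.range_inj (beta_strictAnti lam).dual_right (beta_strictAnti mu).dual_right,
      Set.range_comp, Set.range_comp, h]
  refine eq_of_forall_rowLen_eq fun k => ?_
  have := congrFun hdual k
  simp only [Function.comp_apply, OrderDual.toDual_inj, beta] at this
  omega

theorem mem_range_beta_iff {lam : YoungDiagram} {N : ℕ} (hN : lam.colLen 0 ≤ N) {x : ℤ} :
    x ∈ Set.range (beta lam) ↔ x ∈ (Finset.range N).image (beta lam) ∨ x ≤ -N := by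
  constructor
  · rintro ⟨k, rfl⟩
    by_cases hk : k < N
    · exact Or.inl (Finset.mem_image_of_mem _ (Finset.mem_range.mpr hk))
    · rw [beta_of_colLen_le lam (by omega)]
      omega
  · rintro (hx | hx)
    · obtain ⟨k, -, rfl⟩ := Finset.mem_image.mp hx
      exact ⟨k, rfl⟩
    · exact ⟨(-x).toNat, by rw [beta_of_colLen_le lam (by omega)]; omega⟩

theorem card_filter_range_add_ite (P : ℕ → Prop) [DecidablePred P] (L : ℕ) :
    ((Finset.range L).filter fun b => P (b + 1)).card + (if P 0 then 1 else 0) =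
      ((Finset.range L).filter P).card + (if P L then 1 else 0) := by
  simp only [Finset.card_filter]
  rw [← Finset.sum_range_succ' (fun b => if P b then 1 else 0), Finset.sum_range_succ]

theorem mBox_eq_sum_rows (p : ℕ) (i : ZMod p) (lam : YoungDiagram) {N : ℕ}
    (hN : lam.colLen 0 ≤ N) :
    mBox p i lam = ∑ a ∈ Finset.range N,
      ((Finset.range (lam.rowLen a)).filter fun b : ℕ => ((b - a : ℤ) : ZMod p) = i).card := by
  have hmaps : Set.MapsTo Prod.fst
      (↑(lam.cells.filter fun c => (((c.2 : ℤ) - c.1 : ℤ) : ZMod p) = i) : Set (ℕ × ℕ))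
      (Finset.range N : Set ℕ) := by
    rintro ⟨a, b⟩ hc
    simp only [Finset.coe_filter, Set.mem_ofPred_eq, YoungDiagram.mem_cells] at hc
    have := YoungDiagram.mem_iff_lt_colLen.mp (lam.up_left_mem le_rfl (Nat.zero_le b) hc.1)
    simpa using this.trans_le hN
  rw [mBox, Finset.card_eq_sum_card_fiberwise hmaps]
  refine Finset.sum_congr rfl fun a _ => ?_
  rw [Finset.filter_comm, show lam.cells.filter (fun c => c.1 = a) = lam.row a from rfl,
    YoungDiagram.row_eq_prod, Finset.singleton_product, Finset.filter_map, Finset.card_map]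
  rfl

theorem mBox_add_card_filter_neg_eq (p : ℕ) (i : ZMod p) (lam : YoungDiagram) {N : ℕ}
    (hN : lam.colLen 0 ≤ N) :
    mBox p i lam + ((Finset.range N).filter fun a : ℕ => ((-a : ℤ) : ZMod p) = i + 1).card =
      mBox p (i + 1) lam +
        ((Finset.range N).filter fun a : ℕ => (beta lam a : ZMod p) = i + 1).card := by
  rw [mBox_eq_sum_rows p i lam hN, mBox_eq_sum_rows p (i + 1) lam hN,
    Finset.card_filter _ (Finset.range N), Finset.card_filter _ (Finset.range N),
    ← Finset.sum_add_distrib, ← Finset.sum_add_distrib]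
  refine Finset.sum_congr rfl fun a _ => ?_
  have := card_filter_range_add_ite (fun b : ℕ => ((b - a : ℤ) : ZMod p) = i + 1) (lam.rowLen a)
  simp only [Nat.cast_add, Nat.cast_one, Nat.cast_zero, zero_sub, Int.cast_add, Int.cast_one,
    add_sub_right_comm, add_left_inj] at this
  simpa [beta] using this

def trimRows (lam : YoungDiagram) (s : ℕ → ℕ) (hs : Antitone s) : YoungDiagram where
  cells := lam.cells.filter fun c => c.2 < s c.1
  isLowerSet c c' hle hc := by
    simp only [Finset.coe_filter, Set.mem_ofPred_eq] at hc ⊢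
    exact ⟨lam.isLowerSet hle hc.1, (hc.2.trans_le' hle.2).trans_le (hs hle.1)⟩

theorem mem_sdiff_trimRows {lam : YoungDiagram} {s : ℕ → ℕ} {hs : Antitone s} {a b : ℕ} :
    (a, b) ∈ lam.cells \ (trimRows lam s hs).cells ↔ s a ≤ b ∧ b < lam.rowLen a := by
  simp only [trimRows, Finset.mem_sdiff, Finset.mem_filter, YoungDiagram.mem_cells,
    YoungDiagram.mem_iff_lt_rowLen]
  omega

/-- The row profile left after removing the rim hook running from row `k` to row `m`, which
leaves `t` boxes in row `m`: row `a ∈ [k, m)` keeps `λ_{a+1} - 1` boxes, so that consecutive rows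
of the hook overlap in exactly one column. -/
def stripProfile (lam : YoungDiagram) (k m t : ℕ) (a : ℕ) : ℕ :=
  if a < k ∨ m < a then lam.rowLen a else if a = m then t else lam.rowLen (a + 1) - 1

section Strip

variable {lam : YoungDiagram} {k m t : ℕ}

theorem stripProfile_antitone (ht : t < lam.rowLen m) (ht' : lam.rowLen (m + 1) ≤ t) :
    Antitone (stripProfile lam k m t) := by
  refine antitone_nat_of_succ_le fun a => ?_
  have h₁ := lam.rowLen_anti a (a + 1) (Nat.le_succ a)
  have h₂ := lam.rowLen_anti (a + 1) (a + 1 + 1) (Nat.le_succ _)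
  unfold stripProfile
  split_ifs <;> first | omega | (subst_vars; omega)

theorem sum_Ico_sub_pred_add {f : ℕ → ℕ} (hf : Antitone f) {k m : ℕ} (hkm : k ≤ m) (hm : 0 < f m) :
    ∑ a ∈ Finset.Ico k m, (f a - (f (a + 1) - 1)) + f m = f k + (m - k) := by
  induction m, hkm using Nat.le_induction with
  | base => simp
  | succ m hkm ih =>
    have h₁ : f (m + 1) ≤ f m := hf (Nat.le_succ m)
    rw [Finset.sum_Ico_succ_top hkm]
    have := ih (by omega)
    omega

def removeStrip (lam : YoungDiagram) (k m t : ℕ) (ht : t < lam.rowLen m)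
    (ht' : lam.rowLen (m + 1) ≤ t) : YoungDiagram :=
  trimRows lam (stripProfile lam k m t) (stripProfile_antitone ht ht')

theorem mem_sdiff_removeStrip (ht : t < lam.rowLen m) (ht' : lam.rowLen (m + 1) ≤ t) {a b : ℕ} :
    (a, b) ∈ lam.cells \ (removeStrip lam k m t ht ht').cells ↔
      k ≤ a ∧ a ≤ m ∧ stripProfile lam k m t a ≤ b ∧ b < lam.rowLen a := by
  rw [removeStrip, mem_sdiff_trimRows]
  by_cases ha : a < k ∨ m < a
  · simp only [stripProfile, if_pos ha]
    omega
  · omega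

theorem card_sdiff_removeStrip (hkm : k ≤ m) (ht : t < lam.rowLen m)
    (ht' : lam.rowLen (m + 1) ≤ t) :
    (lam.cells \ (removeStrip lam k m t ht ht').cells).card = lam.rowLen k + (m - k) - t := by
  set s := stripProfile lam k m t
  have hmaps : Set.MapsTo Prod.fst
      (↑(lam.cells \ (removeStrip lam k m t ht ht').cells) : Set (ℕ × ℕ))
      (Finset.Icc k m : Set ℕ) := by
    rintro ⟨a, b⟩ hc
    rw [Finset.mem_coe, mem_sdiff_removeStrip ht ht'] at hc
    simpa using ⟨hc.1, hc.2.1⟩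
  have hfiber : ∀ a ∈ Finset.Icc k m,
      ((lam.cells \ (removeStrip lam k m t ht ht').cells).filter fun c => c.1 = a).card =
        lam.rowLen a - s a := by
    intro a ha
    rw [Finset.mem_Icc] at ha
    rw [← Nat.card_Ico, ← Finset.card_map (s := Finset.Ico (s a) (lam.rowLen a))
      ⟨Prod.mk a, Prod.mk_right_injective a⟩]
    refine congrArg Finset.card ?_
    ext ⟨a', b⟩
    simp only [Finset.mem_filter, mem_sdiff_removeStrip ht ht', Finset.mem_map, Finset.mem_Ico,
      Function.Embedding.coeFn_mk, Prod.mk.injEq]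
    constructor
    · rintro ⟨⟨-, -, hb⟩, rfl⟩
      exact ⟨b, hb, rfl, rfl⟩
    · rintro ⟨b, hb, rfl, rfl⟩
      exact ⟨⟨ha.1, ha.2, hb⟩, rfl⟩
  have hmid : ∀ a ∈ Finset.Ico k m,
      lam.rowLen a - s a = lam.rowLen a - (lam.rowLen (a + 1) - 1) := by
    intro a ha
    rw [Finset.mem_Ico] at ha
    simp only [s, stripProfile]
    rw [if_neg (by omega), if_neg (by omega)]
  have hs : s m = t := by simp only [s, stripProfile]; split_ifs <;> omega
  rw [Finset.card_eq_sum_card_fiberwise hmaps, Finset.sum_congr rfl hfiber,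
    ← Finset.Ico_insert_right hkm, Finset.sum_insert Finset.right_notMem_Ico,
    Finset.sum_congr rfl hmid, hs]
  have := sum_Ico_sub_pred_add (fun _ _ h => lam.rowLen_anti _ _ h) hkm (by omega)
  omega

theorem connected_sdiff_removeStrip (ht : t < lam.rowLen m) (ht' : lam.rowLen (m + 1) ≤ t) :
    Connected (lam.cells \ (removeStrip lam k m t ht ht').cells) := by
  set D := lam.cells \ (removeStrip lam k m t ht ht').cells
  set s := stripProfile lam k m t
  have hmem : ∀ {a b}, (a, b) ∈ D ↔ k ≤ a ∧ a ≤ m ∧ s a ≤ b ∧ b < lam.rowLen a :=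
    mem_sdiff_removeStrip ht ht'
  have hrow : ∀ a n, (a, s a + n) ∈ D →
      Relation.ReflTransGen (fun x y => x ∈ D ∧ y ∈ D ∧ Adj x y) (a, s a + n) (a, s a) := by
    intro a n
    induction n with
    | zero => exact fun _ => .refl
    | succ n ih =>
      intro h
      have h' : (a, s a + n) ∈ D := by rw [hmem] at h ⊢; omega
      exact .head ⟨h, h', Or.inl ⟨rfl, Or.inl rfl⟩⟩ (ih h')
  -- the last box `(a, s a)` of row `a < m` of the hook sits right above a box of row `a + 1`
  have hdown : ∀ a, a < m → (a, s a) ∈ D → (a + 1, s a) ∈ D := by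
    intro a ha h
    have h₁ := lam.rowLen_anti (a + 1) m ha
    have h₂ := lam.rowLen_anti (a + 1) (a + 1 + 1) (Nat.le_succ _)
    rw [hmem] at h ⊢
    simp only [s, stripProfile] at h ⊢
    split_ifs at h ⊢ <;> omega
  refine Connected.of_forall_reflTransGen (m, s m) fun ⟨a, b⟩ hab => ?_
  obtain ⟨n, hn⟩ : ∃ n, a + n = m := ⟨m - a, by rw [hmem] at hab; omega⟩
  induction n generalizing a b with
  | zero =>
    subst hn
    obtain ⟨j, rfl⟩ : ∃ j, b = s a + j := ⟨b - s a, by rw [hmem] at hab; omega⟩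
    exact hrow _ _ hab
  | succ n ih =>
    obtain ⟨j, rfl⟩ : ∃ j, b = s a + j := ⟨b - s a, by rw [hmem] at hab; omega⟩
    have hend : (a, s a) ∈ D := by rw [hmem] at hab ⊢; omega
    have hnext := hdown a (by omega) hend
    exact (hrow a j hab).trans (.head ⟨hend, hnext, Or.inr ⟨rfl, Or.inr rfl⟩⟩
      (ih (a + 1) (s a) hnext (by omega)))

theorem not_square_sdiff_removeStrip (ht : t < lam.rowLen m) (ht' : lam.rowLen (m + 1) ≤ t) :
    ¬∃ a b : ℕ, (a, b) ∈ lam.cells \ (removeStrip lam k m t ht ht').cells ∧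
      (a + 1, b) ∈ lam.cells \ (removeStrip lam k m t ht ht').cells ∧
      (a, b + 1) ∈ lam.cells \ (removeStrip lam k m t ht ht').cells ∧
      (a + 1, b + 1) ∈ lam.cells \ (removeStrip lam k m t ht ht').cells := by
  rintro ⟨a, b, h₁, -, -, h₄⟩
  rw [mem_sdiff_removeStrip] at h₁ h₄
  simp only [stripProfile] at h₁
  split_ifs at h₁ <;> omega

theorem rimHook_removeStrip (hkm : k ≤ m) (ht : t < lam.rowLen m)
    (ht' : lam.rowLen (m + 1) ≤ t) :
    RimHook (lam.rowLen k + (m - k) - t) lam (removeStrip lam k m t ht ht') :=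
  ⟨Finset.filter_subset _ _, card_sdiff_removeStrip hkm ht ht',
    connected_sdiff_removeStrip ht ht', not_square_sdiff_removeStrip ht ht'⟩

end Strip

/-- Moving the bead at position `β_k` up `p` steps to the empty position `β_k - p` removes a rim
`p`-hook; it ends in the last row `m` whose bead lies beyond the empty position. -/
theorem exists_rimHook_of_forall_beta_ne {p : ℕ} (hp : 0 < p) {lam : YoungDiagram} {k : ℕ}
    (hgap : ∀ j, beta lam j ≠ beta lam k - p) : ∃ mu, RimHook p lam mu := by
  have hex : ∃ j, beta lam j < beta lam k - p :=
    ⟨lam.colLen 0 + k + p + 1, by rw [beta_of_colLen_le lam (by omega)]; simp [beta]; omega⟩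
  obtain ⟨j, hm', hjmin⟩ : ∃ j, beta lam j < beta lam k - p ∧
      ∀ i < j, ¬beta lam i < beta lam k - p :=
    ⟨Nat.find hex, Nat.find_spec hex, fun _ => Nat.find_min hex⟩
  have hkj : k < j := (beta_strictAnti lam).lt_iff_gt.mp (by omega)
  obtain ⟨m, rfl⟩ : ∃ m, j = m + 1 := ⟨j - 1, by omega⟩
  have hm : beta lam k - p < beta lam m :=
    lt_of_le_of_ne (not_lt.mp (hjmin m (by omega))) (hgap m).symm
  obtain ⟨t, ht⟩ : ∃ t : ℕ, (t : ℤ) = beta lam k - p + m := ⟨_, Int.toNat_of_nonneg (by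
    simp only [beta] at hm' ⊢; omega)⟩
  simp only [beta] at hm hm' ht
  have hcard : lam.rowLen k + (m - k) - t = p := by omega
  exact ⟨_, hcard ▸ rimHook_removeStrip (by omega) (by omega) (by omega)⟩

theorem IsCore.exists_beta_eq_sub {p : ℕ} (hp : 0 < p) {lam : YoungDiagram} (h : IsCore p lam)
    (k : ℕ) : ∃ j, beta lam j = beta lam k - p := by
  by_contra hgap
  exact h (exists_rimHook_of_forall_beta_ne hp (not_exists.mp hgap))

/-- On the `p`-abacus restricted to positions `≥ a`, every bead of `S` is pushed up as far as
its runner allows. -/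
def IsFlush (p : ℕ) (a : ℤ) (S : Finset ℤ) : Prop :=
  ∀ x ∈ S, a ≤ x ∧ (a ≤ x - p → x - p ∈ S)

namespace IsFlush

variable {p : ℕ} {a : ℤ} {S T : Finset ℤ}

theorem mem_of_intCast_eq (hS : IsFlush p a S) {x y : ℤ} (hx : x ∈ S) (hay : a ≤ y)
    (hyx : y ≤ x) (hxy : (y : ZMod p) = x) : y ∈ S := by
  obtain ⟨n, hn⟩ : ∃ n : ℕ, x - y = n * p := by
    obtain ⟨c, hc⟩ := (ZMod.intCast_eq_intCast_iff_dvd_sub _ _ _).mp hxy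
    rcases Nat.eq_zero_or_pos p with rfl | hp
    · exact ⟨0, by simpa using hc⟩
    · exact ⟨c.toNat, by rw [Int.toNat_of_nonneg (by nlinarith)]; linarith⟩
  induction n generalizing y with
  | zero => simp_all [sub_eq_zero]
  | succ n ih =>
    have hnp : (0 : ℤ) ≤ n * p := by positivity
    push_cast at hn
    have hyp : y + p ∈ S := ih (by linarith) (by linarith)
      (by push_cast; rw [ZMod.natCast_self, add_zero, hxy]) (by linarith)
    simpa using (hS _ hyp).2 (by simpa using hay)

theorem subset_of_card_filter_le (hS : IsFlush p a S) (hT : IsFlush p a T)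
    (h : ∀ i : ZMod p, (S.filter fun x : ℤ => (x : ZMod p) = i).card ≤
      (T.filter fun x : ℤ => (x : ZMod p) = i).card) : S ⊆ T := by
  intro x hx
  by_contra hxT
  have hsub : (T.filter fun y : ℤ => (y : ZMod p) = x) ⊂
      S.filter fun y : ℤ => (y : ZMod p) = x := by
    refine Finset.ssubset_iff_of_subset (fun y hy => ?_) |>.mpr
      ⟨x, Finset.mem_filter.mpr ⟨hx, rfl⟩, fun hx' => hxT (Finset.mem_filter.mp hx').1⟩
    rw [Finset.mem_filter] at hy ⊢
    have hyx : y < x := lt_of_not_ge fun hxy =>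
      hxT (hT.mem_of_intCast_eq hy.1 (hS x hx).1 hxy hy.2.symm)
    exact ⟨hS.mem_of_intCast_eq hx (hT y hy.1).1 hyx.le hy.2, hy.2⟩
  exact (Finset.card_lt_card hsub).not_ge (h _)

theorem eq_of_card_filter_eq (hS : IsFlush p a S) (hT : IsFlush p a T)
    (h : ∀ i : ZMod p, (S.filter fun x : ℤ => (x : ZMod p) = i).card =
      (T.filter fun x : ℤ => (x : ZMod p) = i).card) : S = T :=
  (hS.subset_of_card_filter_le hT fun i => (h i).le).antisymm
    (hT.subset_of_card_filter_le hS fun i => (h i).ge)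

end IsFlush

theorem IsCore.isFlush {p : ℕ} (hp : 0 < p) {lam : YoungDiagram} (h : IsCore p lam) {N : ℕ}
    (hN : lam.colLen 0 ≤ N) : IsFlush p (1 - N) ((Finset.range N).image (beta lam)) := by
  rintro _ hx
  obtain ⟨k, hk, rfl⟩ := Finset.mem_image.mp hx
  rw [Finset.mem_range] at hk
  refine ⟨by simp only [beta]; omega, fun hle => ?_⟩
  obtain ⟨j, hj⟩ := h.exists_beta_eq_sub hp k
  rw [← hj]
  exact ((mem_range_beta_iff hN).mp ⟨j, rfl⟩).resolve_right (by omega)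

theorem card_filter_image_beta (p : ℕ) (lam : YoungDiagram) (N : ℕ) (i : ZMod p) :
    (((Finset.range N).image (beta lam)).filter fun x : ℤ => (x : ZMod p) = i).card =
      ((Finset.range N).filter fun a : ℕ => (beta lam a : ZMod p) = i).card := by
  rw [Finset.filter_image, Finset.card_image_of_injective _ (beta_strictAnti lam).injective]

theorem IsCore.eq_of_mBox_add_eq {p : ℕ} (hp : 0 < p) {nu₁ nu₂ : YoungDiagram}
    (h₁ : IsCore p nu₁) (h₂ : IsCore p nu₂) {a b : ℕ}
    (h : ∀ i, mBox p i nu₁ + a = mBox p i nu₂ + b) : nu₁ = nu₂ := by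
  set N := max (nu₁.colLen 0) (nu₂.colLen 0)
  have hN₁ : nu₁.colLen 0 ≤ N := le_max_left _ _
  have hN₂ : nu₂.colLen 0 ≤ N := le_max_right _ _
  have hrunners : ∀ i : ZMod p,
      ((Finset.range N).filter fun k : ℕ => (beta nu₁ k : ZMod p) = i).card =
        ((Finset.range N).filter fun k : ℕ => (beta nu₂ k : ZMod p) = i).card := by
    intro i
    have e₁ := mBox_add_card_filter_neg_eq p (i - 1) nu₁ hN₁
    have e₂ := mBox_add_card_filter_neg_eq p (i - 1) nu₂ hN₂
    have d₁ := h (i - 1)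
    have d₂ := h (i - 1 + 1)
    rw [sub_add_cancel] at e₁ e₂ d₂
    omega
  have hbeads : (Finset.range N).image (beta nu₁) = (Finset.range N).image (beta nu₂) :=
    (h₁.isFlush hp hN₁).eq_of_card_filter_eq (h₂.isFlush hp hN₂) fun i => by
      rw [card_filter_image_beta, card_filter_image_beta, hrunners]
  refine eq_of_range_beta_eq (Set.ext fun x => ?_)
  rw [mem_range_beta_iff hN₁, mem_range_beta_iff hN₂, hbeads]

/-- "Same `p`-core" is expressed as the existence of a common `p`-core reachable from both by
successively removing rim `p`-hooks; this is equivalent to equality of `p`-cores since the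
`p`-core is independent of the removal order. -/
theorem same_core_iff_same_content_multiset (p d : ℕ) (hp : 0 < p)
    (lam mu : YoungDiagram)
    (hlam : lam.cells.card = d) (hmu : mu.cells.card = d) :
    (∃ nu : YoungDiagram, IsCore p nu ∧
        Relation.ReflTransGen (RimHook p) lam nu ∧
        Relation.ReflTransGen (RimHook p) mu nu)
      ↔ ∀ i : ZMod p, mBox p i lam = mBox p i mu := by
  have : NeZero p := ⟨hp.ne'⟩
  constructor
  · rintro ⟨nu, -, hlam_nu, hmu_nu⟩ i
    obtain ⟨n₁, hcard₁, hm₁⟩ := mBox_eq_add_of_reflTransGen hlam_nu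
    obtain ⟨n₂, hcard₂, hm₂⟩ := mBox_eq_add_of_reflTransGen hmu_nu
    have hn : n₁ = n₂ := Nat.eq_of_mul_eq_mul_right hp (by omega)
    rw [hm₁, hm₂, hn]
  · intro h
    obtain ⟨nu₁, hcore₁, hlam_nu⟩ := exists_isCore_reflTransGen hp lam
    obtain ⟨nu₂, hcore₂, hmu_nu⟩ := exists_isCore_reflTransGen hp mu
    obtain ⟨n₁, -, hm₁⟩ := mBox_eq_add_of_reflTransGen hlam_nu
    obtain ⟨n₂, -, hm₂⟩ := mBox_eq_add_of_reflTransGen hmu_nu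
    obtain rfl := hcore₁.eq_of_mBox_add_eq hp hcore₂ (a := n₁) (b := n₂)
      fun i => by rw [← hm₁, ← hm₂, h]
    exact ⟨nu₁, hcore₁, hlam_nu, hmu_nu⟩

end Stmt17
end
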